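/- Let E_0, E_1 : ℝ^D → ℝ be smooth and θ₀ ∈ ℝ^D. For h > 0 define the modified loss Ẽ_h(θ) = ½(E_0(θ) + E_1(θ)) + 2h ( (1/4) ‖∇Ē(θ)‖² − (1/4) ⟨∇E_1(θ), ∇E_0(θ₀)⟩ ), where Ē = ½(E_0 + E_1). Then there exist C > 0 and h₀ > 0 such that for every h ∈ (0, h₀) and every solution φ : [0, 2h] → ℝ^D of φ′(t) = −∇Ẽ_h(φ(t)) with φ(0) = θ₀, one has ‖φ(2h) − θ_2(h)‖ ≤ C h³, where θ_2(h) is the result of the two SGD steps θ_1(h) = θ₀ − h∇E_0(θ₀) and θ_2(h) = θ_1(h) − h∇E_1(θ_1(h)). -/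

import Mathlib

open scoped RealInnerProductSpace

/-- The average of the two batch losses. -/
noncomputable def avgLoss2 {D : ℕ} (E₀ E₁ : EuclideanSpace ℝ (Fin D) → ℝ)
    (θ : EuclideanSpace ℝ (Fin D)) : ℝ :=
  (1 / 2 : ℝ) * (E₀ θ + E₁ θ)

/-- The modified loss for two SGD steps, depending on the initial parameters `θ₀`. -/
noncomputable def modLoss2 {D : ℕ} (E₀ E₁ : EuclideanSpace ℝ (Fin D) → ℝ)
    (θ₀ : EuclideanSpace ℝ (Fin D)) (h : ℝ) (θ : EuclideanSpace ℝ (Fin D)) : ℝ :=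
  avgLoss2 E₀ E₁ θ
    + 2 * h * ((1 / 4 : ℝ) * ‖gradient (avgLoss2 E₀ E₁) θ‖ ^ 2
        - (1 / 4 : ℝ) * ⟪gradient E₁ θ, gradient E₀ θ₀⟫)

section SGDHelpers

open Set Metric InnerProductSpace
open scoped ContDiff

set_option linter.unusedSectionVars false

section normedHelpers
variable {F G : Type*} [NormedAddCommGroup F] [NormedSpace ℝ F] [ProperSpace F]
  [NormedAddCommGroup G] [NormedSpace ℝ G]

lemma sgd_bound (f : F → G) (hf : Continuous f) (c : F) (r : ℝ) :
    ∃ M, 0 ≤ M ∧ ∀ x ∈ closedBall c r, ‖f x‖ ≤ M := by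
  obtain ⟨M, hM⟩ := (isCompact_closedBall c r).exists_bound_of_continuousOn hf.continuousOn
  exact ⟨max M 0, le_max_right _ _, fun x hx => (hM x hx).trans (le_max_left _ _)⟩

lemma sgd_lip (f : F → G) (hf : ContDiff ℝ ∞ f) (c : F) (r : ℝ) :
    ∃ L, 0 ≤ L ∧ ∀ x ∈ closedBall c r, ∀ y ∈ closedBall c r, ‖f x - f y‖ ≤ L * ‖x - y‖ := by
  obtain ⟨L, hL0, hL⟩ := sgd_bound (fderiv ℝ f) (hf.continuous_fderiv (by simp)) c r
  refine ⟨L, hL0, fun x hx y hy => ?_⟩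
  exact (convex_closedBall c r).norm_image_sub_le_of_norm_fderiv_le
    (fun z _ => hf.differentiable (by simp) z) hL hy hx

lemma sgd_quad (f : F → G) (hf : ContDiff ℝ ∞ f) (c : F) (r : ℝ) :
    ∃ K, 0 ≤ K ∧ ∀ x ∈ closedBall c r,
      ‖f x - f c - fderiv ℝ f c (x - c)‖ ≤ K * ‖x - c‖ ^ 2 := by
  obtain ⟨K, hK0, hK⟩ := sgd_lip (fderiv ℝ f) (hf.fderiv_right (m := ∞) (by simp)) c r
  refine ⟨K, hK0, fun x hx => ?_⟩
  rw [mem_closedBall_iff_norm] at hx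
  have hrc : 0 ≤ r := le_trans (norm_nonneg _) hx
  set g : F → G := fun z => f z - fderiv ℝ f c (z - c) with hg
  have hdg : ∀ z, HasFDerivAt g (fderiv ℝ f z - fderiv ℝ f c) z := by
    intro z
    have h1 : HasFDerivAt f (fderiv ℝ f z) z :=
      (hf.differentiable (by simp) z).hasFDerivAt
    have h2 : HasFDerivAt (fun w : F => fderiv ℝ f c (w - c)) (fderiv ℝ f c) z := by
      simpa [map_sub] using
        ((fderiv ℝ f c).hasFDerivAt (x := z)).sub_const (fderiv ℝ f c c)
    exact h1.sub h2
  have hxc : x ∈ closedBall c ‖x - c‖ := mem_closedBall_iff_norm.2 le_rfl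
  have hsub : closedBall c ‖x - c‖ ⊆ closedBall c r := closedBall_subset_closedBall hx
  have key := (convex_closedBall c ‖x - c‖).norm_image_sub_le_of_norm_fderiv_le
    (f := g) (fun z _ => (hdg z).differentiableAt) (C := K * ‖x - c‖)
    (fun z hz => by
      rw [(hdg z).fderiv]
      calc ‖fderiv ℝ f z - fderiv ℝ f c‖ ≤ K * ‖z - c‖ :=
            hK z (hsub hz) c (mem_closedBall_self hrc)
        _ ≤ K * ‖x - c‖ := by
            apply mul_le_mul_of_nonneg_left _ hK0
            rwa [mem_closedBall_iff_norm] at hz)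
    (mem_closedBall_self (norm_nonneg _)) hxc
  have e : f x - f c - fderiv ℝ f c (x - c) = g x - g c := by simp [hg]; abel
  rw [e]
  calc ‖g x - g c‖ ≤ K * ‖x - c‖ * ‖x - c‖ := key
    _ = K * ‖x - c‖ ^ 2 := by ring

end normedHelpers

section gradHelpers
variable {F : Type*} [NormedAddCommGroup F] [InnerProductSpace ℝ F] [CompleteSpace F]

lemma sgd_contDiff_grad (f : F → ℝ) (hf : ContDiff ℝ ∞ f) : ContDiff ℝ ∞ (gradient f) := by
  have : gradient f = fun x => (toDual ℝ F).symm (fderiv ℝ f x) := rfl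
  rw [this]
  exact ((toDual ℝ F).symm : _ ≃ₗᵢ[ℝ] _).contDiff.comp (hf.fderiv_right (by simp))

lemma sgd_hasFDerivAt_grad (f : F → ℝ) (hf : ContDiff ℝ ∞ f) (x : F) :
    HasFDerivAt (gradient f) (fderiv ℝ (gradient f) x) x :=
  ((sgd_contDiff_grad f hf).differentiable (by simp) x).hasFDerivAt

lemma sgd_symm (f : F → ℝ) (hf : ContDiff ℝ ∞ f) (x u w : F) :
    ⟪fderiv ℝ (gradient f) x u, w⟫ = ⟪fderiv ℝ (gradient f) x w, u⟫ := by
  have hdf : Differentiable ℝ f := hf.differentiable (by simp)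
  have h1 : ContDiff ℝ ∞ (fderiv ℝ f) := hf.fderiv_right (m := ∞) (by simp)
  have hd2 : HasFDerivAt (fderiv ℝ f) (fderiv ℝ (fderiv ℝ f) x) x :=
    ((h1.differentiable (by simp)) x).hasFDerivAt
  set e : StrongDual ℝ F →L[ℝ] F :=
    ((toDual ℝ F).symm : StrongDual ℝ F ≃ₗᵢ[ℝ] F).toLinearIsometry.toContinuousLinearMap
  have hcomp : HasFDerivAt (gradient f) (e.comp (fderiv ℝ (fderiv ℝ f) x)) x := by
    have := e.hasFDerivAt.comp x hd2
    exact this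
  have heq : fderiv ℝ (gradient f) x = e.comp (fderiv ℝ (fderiv ℝ f) x) := hcomp.fderiv
  have hsymm := second_derivative_symmetric (f := f) (fun y => (hdf y).hasFDerivAt) hd2
  rw [heq]
  simp only [ContinuousLinearMap.coe_comp', Function.comp_apply]
  show ⟪(toDual ℝ F).symm _, w⟫ = ⟪(toDual ℝ F).symm _, u⟫
  rw [toDual_symm_apply, toDual_symm_apply, hsymm u w]

lemma sgd_toDual_grad (f : F → ℝ) (x : F) : toDual ℝ F (gradient f x) = fderiv ℝ f x := by
  simp [gradient]

lemma sgd_inner_grad (f : F → ℝ) (x v : F) : ⟪gradient f x, v⟫ = fderiv ℝ f x v := by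
  rw [← sgd_toDual_grad]; simp [toDual_apply_apply]

lemma sgd_hasGradientAt (f : F → ℝ) (g : F) (x : F) (D : F →L[ℝ] ℝ)
    (hD : HasFDerivAt f D x) (h : ∀ v, D v = ⟪g, v⟫) : HasGradientAt f g x := by
  have : D = toDual ℝ F g := by
    ext v; rw [h v]; simp [toDual_apply_apply]
  exact hasGradientAt_iff_hasFDerivAt.2 (this ▸ hD)

lemma sgd_grad_avg (E₀ E₁ : F → ℝ) (h₀ : ContDiff ℝ ∞ E₀) (h₁ : ContDiff ℝ ∞ E₁) (x : F) :
    gradient (fun θ => (1/2 : ℝ) * (E₀ θ + E₁ θ)) x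
      = (1/2 : ℝ) • (gradient E₀ x + gradient E₁ x) := by
  refine HasGradientAt.gradient ?_
  refine sgd_hasGradientAt _ _ x ((1/2 : ℝ) • (fderiv ℝ E₀ x + fderiv ℝ E₁ x)) ?_ ?_
  · exact ((h₀.differentiable (by simp) x).hasFDerivAt.add
      (h₁.differentiable (by simp) x).hasFDerivAt).const_mul (1/2 : ℝ)
  · intro v
    rw [inner_smul_left, inner_add_left, sgd_inner_grad, sgd_inner_grad]
    simp only [ContinuousLinearMap.smul_apply, ContinuousLinearMap.add_apply, smul_eq_mul]
    norm_num

lemma sgd_grad_mod (A f₁ : F → ℝ) (hA : ContDiff ℝ ∞ A) (h₁ : ContDiff ℝ ∞ f₁)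
    (g₀ : F) (h : ℝ) (x : F) :
    gradient (fun θ => A θ + 2 * h * ((1/4 : ℝ) * ‖gradient A θ‖ ^ 2
        - (1/4 : ℝ) * ⟪gradient f₁ θ, g₀⟫)) x
      = gradient A x
        + h • (fderiv ℝ (gradient A) x (gradient A x))
        - (h/2) • (fderiv ℝ (gradient f₁) x g₀) := by
  set G := gradient A with hGdef
  set DG := fderiv ℝ G x with hDGdef
  set A₁ := fderiv ℝ (gradient f₁) x with hA₁def
  have hGd : HasFDerivAt G DG x := sgd_hasFDerivAt_grad _ hA x
  have hG1d : HasFDerivAt (gradient f₁) A₁ x := sgd_hasFDerivAt_grad _ h₁ x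
  have n₁ : HasFDerivAt (fun θ => ‖G θ‖ ^ 2)
      ((fderivInnerCLM ℝ (G x, G x)).comp (DG.prod DG)) x := by
    have heq : (fun θ => ‖G θ‖ ^ 2) = fun θ => ⟪G θ, G θ⟫ :=
      funext fun θ => (real_inner_self_eq_norm_sq _).symm
    rw [heq]
    exact hGd.inner ℝ hGd
  have n₂ : HasFDerivAt (fun θ => ⟪gradient f₁ θ, g₀⟫)
      ((fderivInnerCLM ℝ (gradient f₁ x, g₀)).comp (A₁.prod 0)) x :=
    hG1d.inner ℝ (hasFDerivAt_const g₀ x)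
  have hAd : HasFDerivAt A (fderiv ℝ A x) x :=
    (hA.differentiable (by simp) x).hasFDerivAt
  have total : HasFDerivAt (fun θ => A θ + 2 * h * ((1/4 : ℝ) * ‖G θ‖ ^ 2
        - (1/4 : ℝ) * ⟪gradient f₁ θ, g₀⟫))
      (fderiv ℝ A x + (2*h) •
        ((1/4 : ℝ) • ((fderivInnerCLM ℝ (G x, G x)).comp (DG.prod DG))
          - (1/4 : ℝ) • ((fderivInnerCLM ℝ (gradient f₁ x, g₀)).comp (A₁.prod 0)))) x :=
    hAd.add (((n₁.const_mul (1/4 : ℝ)).sub (n₂.const_mul (1/4 : ℝ))).const_mul (2*h))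
  refine HasGradientAt.gradient (sgd_hasGradientAt _ _ x _ total ?_)
  intro v
  have e₁ : ⟪DG v, G x⟫ = ⟪DG (G x), v⟫ := sgd_symm _ hA x v (G x)
  have e₂ : ⟪A₁ v, g₀⟫ = ⟪A₁ g₀, v⟫ := sgd_symm _ h₁ x v g₀
  rw [inner_sub_left, inner_add_left, inner_smul_left, inner_smul_left, sgd_inner_grad]
  simp only [starRingEnd_apply, star_trivial, ContinuousLinearMap.add_apply,
    ContinuousLinearMap.smul_apply,
    ContinuousLinearMap.sub_apply, ContinuousLinearMap.coe_comp', Function.comp_apply,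
    ContinuousLinearMap.prod_apply, fderivInnerCLM_apply, ContinuousLinearMap.zero_apply,
    smul_eq_mul, inner_zero_right, RCLike.star_def]
  rw [show ⟪G x, DG v⟫_ℝ = ⟪DG (G x), v⟫_ℝ from (real_inner_comm _ _).trans e₁, e₁, e₂]
  ring

end gradHelpers
end SGDHelpers

section MainThm
open Set Metric InnerProductSpace
open scoped ContDiff

set_option maxHeartbeats 1000000 in
/-- Two steps of SGD follow the gradient flow of the modified loss with an error
of order `O(h³)`. -/
theorem two_sgd_steps_follow_modified_flow {D : ℕ}
    (E₀ E₁ : EuclideanSpace ℝ (Fin D) → ℝ)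
    (hE₀ : ContDiff ℝ (⊤ : ℕ∞) E₀) (hE₁ : ContDiff ℝ (⊤ : ℕ∞) E₁)
    (θ₀ : EuclideanSpace ℝ (Fin D)) :
    ∃ C > (0 : ℝ), ∃ h₀ > (0 : ℝ), ∀ h ∈ Set.Ioo (0 : ℝ) h₀,
      ∀ φ : ℝ → EuclideanSpace ℝ (Fin D),
        φ 0 = θ₀ →
        (∀ t ∈ Set.Icc (0 : ℝ) (2 * h),
          HasDerivAt φ (-(gradient (modLoss2 E₀ E₁ θ₀ h) (φ t))) t) →
        ‖φ (2 * h) -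
            ((θ₀ - h • gradient E₀ θ₀) - h • gradient E₁ (θ₀ - h • gradient E₀ θ₀))‖
          ≤ C * h ^ 3 := by
  have hE₀' : ContDiff ℝ ∞ E₀ := hE₀.of_le (by simp)
  have hE₁' : ContDiff ℝ ∞ E₁ := hE₁.of_le (by simp)
  set A : EuclideanSpace ℝ (Fin D) → ℝ := avgLoss2 E₀ E₁ with hAdef
  have hA : ContDiff ℝ ∞ A := contDiff_const.mul (hE₀'.add hE₁')
  set G : EuclideanSpace ℝ (Fin D) → EuclideanSpace ℝ (Fin D) := gradient A with hGdef
  set G₁ : EuclideanSpace ℝ (Fin D) → EuclideanSpace ℝ (Fin D) := gradient E₁ with hG₁def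
  set g₀ : EuclideanSpace ℝ (Fin D) := gradient E₀ θ₀ with hg₀def
  have hG : ContDiff ℝ ∞ G := sgd_contDiff_grad _ hA
  have hG₁ : ContDiff ℝ ∞ G₁ := sgd_contDiff_grad _ hE₁'
  -- the vector field, split into h-independent pieces
  set V₀ : EuclideanSpace ℝ (Fin D) → EuclideanSpace ℝ (Fin D) := fun x => -(G x) with hV₀def
  set W : EuclideanSpace ℝ (Fin D) → EuclideanSpace ℝ (Fin D) :=
    fun x => -(fderiv ℝ G x (G x)) + (2⁻¹ : ℝ) • (fderiv ℝ G₁ x g₀) with hWdef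
  have hV₀ : ContDiff ℝ ∞ V₀ := hG.neg
  have hW : ContDiff ℝ ∞ W := by
    have h1 : ContDiff ℝ ∞ (fun x => fderiv ℝ G x (G x)) :=
      (hG.fderiv_right (m := ∞) (by simp)).clm_apply hG
    have h2 : ContDiff ℝ ∞ (fun x => fderiv ℝ G₁ x g₀) :=
      (hG₁.fderiv_right (m := ∞) (by simp)).clm_apply contDiff_const
    exact h1.neg.add (h2.const_smul _)
  have key : ∀ (h : ℝ) (x : EuclideanSpace ℝ (Fin D)),
      -(gradient (modLoss2 E₀ E₁ θ₀ h) x) = V₀ x + h • W x := by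
    intro h x
    have hmod : modLoss2 E₀ E₁ θ₀ h = fun θ => A θ + 2 * h * ((1/4 : ℝ) * ‖gradient A θ‖ ^ 2
        - (1/4 : ℝ) * ⟪gradient E₁ θ, g₀⟫) := rfl
    rw [hmod, sgd_grad_mod A E₁ hA hE₁' g₀ h x]
    simp only [hV₀def, hWdef, hGdef, hG₁def]
    module
  -- structural identities at θ₀
  set DG := fderiv ℝ G θ₀ with hDGdef
  set A₁ := fderiv ℝ G₁ θ₀ with hA₁def
  set g₁ := G₁ θ₀ with hg₁def
  have hGθ₀ : G θ₀ = (1/2 : ℝ) • (g₀ + g₁) := by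
    rw [hGdef, hAdef, hg₁def, hG₁def, hg₀def]
    exact sgd_grad_avg E₀ E₁ hE₀' hE₁' θ₀
  have hPeq : fderiv ℝ V₀ θ₀ = -DG := by
    rw [hV₀def, hDGdef]
    exact fderiv_neg
  set w₀ := W θ₀ with hw₀def
  have hw₀' : w₀ = -(DG (G θ₀)) + (2⁻¹ : ℝ) • (A₁ g₀) := rfl
  have hV₀θ₀ : V₀ θ₀ = -(G θ₀) := rfl
  have hV₀diff : Differentiable ℝ V₀ := hV₀.differentiable (by simp)
  have hWdiff : Differentiable ℝ W := hW.differentiable (by simp)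
  -- constants
  obtain ⟨M₀, hM₀0, hM₀⟩ := sgd_bound V₀ hV₀.continuous θ₀ 1
  obtain ⟨MW, hMW0, hMW⟩ := sgd_bound W hW.continuous θ₀ 1
  set M : ℝ := M₀ + MW + 1 with hMdef
  have hM1 : (1 : ℝ) ≤ M := by simp only [hMdef]; linarith
  have hM0 : (0 : ℝ) < M := by linarith
  have hMsum : M₀ + MW + 1 ≤ M := le_of_eq hMdef.symm
  clear_value M
  obtain ⟨L₀, hL₀0, hL₀⟩ := sgd_lip V₀ hV₀ θ₀ 1
  obtain ⟨LW, hLW0, hLW⟩ := sgd_lip W hW θ₀ 1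
  set L : ℝ := L₀ + LW with hLdef
  have hL0 : (0 : ℝ) ≤ L := by simp only [hLdef]; linarith
  have hLsum : L₀ + LW ≤ L := le_of_eq hLdef.symm
  clear_value L
  obtain ⟨K₀, hK₀0, hK₀⟩ := sgd_quad V₀ hV₀ θ₀ 1
  obtain ⟨KW, hKW0, hKW⟩ := sgd_quad W hW θ₀ 1
  set K : ℝ := K₀ + KW with hKdef
  have hK0 : (0 : ℝ) ≤ K := by simp only [hKdef]; linarith
  have hKsum : K₀ + KW ≤ K := le_of_eq hKdef.symm
  clear_value K
  obtain ⟨K₁, hK₁0, hK₁⟩ := sgd_quad G₁ hG₁ θ₀ 1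
  set P := fderiv ℝ V₀ θ₀ with hPdef
  set Q := fderiv ℝ W θ₀ with hQdef
  have hPDG : P = -DG := hPeq
  set N : ℝ := ‖P‖ + ‖Q‖ with hNdef
  have hN0 : (0 : ℝ) ≤ N := by rw [hNdef]; positivity
  have hNge : ‖P‖ + ‖Q‖ ≤ N := le_of_eq hNdef.symm
  clear_value N
  -- from now on we do not need the defining bodies any more
  clear_value A G G₁ g₀ g₁ DG A₁ V₀ W P Q w₀
  set C₁ : ℝ := K * M^2 + N * L * M / 2 with hC₁def
  have hC₁0 : (0 : ℝ) ≤ C₁ := by rw [hC₁def]; positivity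
  clear_value C₁
  set Cfin : ℝ := 8*C₁/3 + 2*(‖P‖*‖w₀‖ + ‖Q‖*M) + K₁*‖g₀‖^2 + 1 with hCfindef
  have hCfin0 : (0 : ℝ) < Cfin := by rw [hCfindef]; positivity
  clear_value Cfin
  set h₀ : ℝ := min (min 1 (1/(8*M))) (1/(1+‖g₀‖)) with hh₀def
  have hh₀0 : (0 : ℝ) < h₀ := by
    rw [hh₀def]
    apply lt_min (lt_min one_pos (by positivity)) (by positivity)
  have hh₀le1 : h₀ ≤ 1 := le_trans (hh₀def ▸ min_le_left _ _) (min_le_left _ _)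
  have hh₀le2 : h₀ ≤ 1/(8*M) := le_trans (hh₀def ▸ min_le_left _ _) (min_le_right _ _)
  have hh₀le3 : h₀ ≤ 1/(1+‖g₀‖) := hh₀def ▸ min_le_right _ _
  clear_value h₀
  refine ⟨Cfin, hCfin0, h₀, hh₀0, ?_⟩
  rintro h ⟨hh0, hhlt⟩ φ hφ0 hφd
  -- basic bounds on h
  have hh1 : h ≤ 1 := le_trans hhlt.le hh₀le1
  have hh8M : 2 * h * M ≤ 1/4 := by
    have h1 : h ≤ 1/(8*M) := le_trans hhlt.le hh₀le2
    have h8M : (0:ℝ) < 8*M := by linarith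
    rw [le_div_iff₀ h8M] at h1
    have h2 : 2*h*M = (h*(8*M))/4 := by ring
    rw [h2]; linarith
  have hhg₀ : h * ‖g₀‖ ≤ 1 := by
    have h1 : h ≤ 1/(1+‖g₀‖) := le_trans hhlt.le hh₀le3
    have hpos : (0:ℝ) < 1+‖g₀‖ := by positivity
    rw [le_div_iff₀ hpos] at h1
    have h2 : h * ‖g₀‖ = h*(1+‖g₀‖) - h := by ring
    rw [h2]; linarith
  -- the vector field for this h
  set V : EuclideanSpace ℝ (Fin D) → EuclideanSpace ℝ (Fin D) :=
    fun x => V₀ x + h • W x with hVdef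
  have hφ' : ∀ t ∈ Icc (0:ℝ) (2*h), HasDerivAt φ (V (φ t)) t := by
    intro t ht
    have := hφd t ht
    rwa [key h (φ t)] at this
  have hφcont : ContinuousOn φ (Icc (0:ℝ) (2*h)) :=
    fun t ht => (hφ' t ht).continuousAt.continuousWithinAt
  have hVθ₀ : V θ₀ = -(G θ₀) + h • w₀ := by
    rw [hVdef]
    show V₀ θ₀ + h • W θ₀ = _
    rw [hV₀θ₀, ← hw₀def]
  -- uniform bounds for V on the unit ball
  have hVb : ∀ x ∈ closedBall θ₀ 1, ‖V x‖ ≤ M := by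
    intro x hx
    calc ‖V₀ x + h • W x‖ ≤ ‖V₀ x‖ + ‖h • W x‖ := norm_add_le _ _
      _ ≤ M₀ + h * ‖W x‖ := by
          rw [norm_smul, Real.norm_eq_abs, abs_of_nonneg hh0.le]
          exact add_le_add (hM₀ x hx) le_rfl
      _ ≤ M₀ + 1 * MW := by
          have h1 : h * ‖W x‖ ≤ 1 * MW :=
            mul_le_mul hh1 (hMW x hx) (norm_nonneg _) zero_le_one
          linarith
      _ ≤ M := by linarith
  have hVlip : ∀ x ∈ closedBall θ₀ 1, ∀ y ∈ closedBall θ₀ 1, ‖V x - V y‖ ≤ L * ‖x - y‖ := by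
    intro x hx y hy
    have e : V x - V y = (V₀ x - V₀ y) + h • (W x - W y) := by
      simp only [hVdef, smul_sub]; abel
    rw [e]
    calc ‖(V₀ x - V₀ y) + h • (W x - W y)‖
        ≤ ‖V₀ x - V₀ y‖ + h * ‖W x - W y‖ := by
          refine (norm_add_le _ _).trans ?_
          rw [norm_smul, Real.norm_eq_abs, abs_of_nonneg hh0.le]
      _ ≤ L₀ * ‖x - y‖ + 1 * (LW * ‖x - y‖) := by
          refine add_le_add (hL₀ x hx y hy) ?_
          refine mul_le_mul hh1 (hLW x hx y hy) (by positivity) zero_le_one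
      _ ≤ L * ‖x - y‖ := by nlinarith [norm_nonneg (x - y)]
  -- derivative of V at θ₀
  have hDV : HasFDerivAt V (P + h • Q) θ₀ := by
    rw [hVdef, hPdef, hQdef]
    exact (hV₀diff θ₀).hasFDerivAt.add (((hWdiff θ₀).hasFDerivAt).const_smul h)
  have hDVnorm : ‖P + h • Q‖ ≤ N := by
    calc ‖P + h • Q‖ ≤ ‖P‖ + ‖h • Q‖ := norm_add_le _ _
      _ ≤ ‖P‖ + 1 * ‖Q‖ := by
          rw [norm_smul, Real.norm_eq_abs, abs_of_nonneg hh0.le]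
          exact add_le_add le_rfl (mul_le_mul_of_nonneg_right hh1 (norm_nonneg _))
      _ ≤ N := by linarith
  have hVquad : ∀ x ∈ closedBall θ₀ 1,
      ‖V x - V θ₀ - (P + h • Q) (x - θ₀)‖ ≤ K * ‖x - θ₀‖ ^ 2 := by
    intro x hx
    have e : V x - V θ₀ - (P + h • Q) (x - θ₀)
        = (V₀ x - V₀ θ₀ - P (x - θ₀)) + h • (W x - w₀ - Q (x - θ₀)) := by
      simp only [hVdef, ContinuousLinearMap.add_apply, ContinuousLinearMap.smul_apply,
        smul_sub, hw₀def]
      abel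
    rw [e]
    calc ‖(V₀ x - V₀ θ₀ - P (x - θ₀)) + h • (W x - w₀ - Q (x - θ₀))‖
        ≤ ‖V₀ x - V₀ θ₀ - P (x - θ₀)‖ + h * ‖W x - w₀ - Q (x - θ₀)‖ := by
          refine (norm_add_le _ _).trans ?_
          rw [norm_smul, Real.norm_eq_abs, abs_of_nonneg hh0.le]
      _ ≤ K₀ * ‖x - θ₀‖ ^ 2 + 1 * (KW * ‖x - θ₀‖ ^ 2) := by
          refine add_le_add (hPdef ▸ hK₀ x hx) ?_
          exact mul_le_mul hh1 (hw₀def ▸ hQdef ▸ hKW x hx) (by positivity) zero_le_one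
      _ ≤ K * ‖x - θ₀‖ ^ 2 := by nlinarith [sq_nonneg ‖x - θ₀‖]
  -- φ stays in the ball of radius 1/2
  have hθ₀mem : θ₀ ∈ closedBall θ₀ (1:ℝ) := mem_closedBall_self zero_le_one
  have hstay : ∀ t ∈ Icc (0:ℝ) (2*h), ‖φ t - θ₀‖ ≤ 1/2 := by
    by_contra hcon
    push_neg at hcon
    set S : Set ℝ := {t ∈ Icc (0:ℝ) (2*h) | 1/2 ≤ ‖φ t - θ₀‖} with hSdef
    have hSne : S.Nonempty := by
      obtain ⟨t, ht, ht2⟩ := hcon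
      exact ⟨t, ht, ht2.le⟩
    have hScl : IsClosed S := by
      have hc : ContinuousOn (fun t => ‖φ t - θ₀‖) (Icc (0:ℝ) (2*h)) :=
        (hφcont.sub continuousOn_const).norm
      have := hc.preimage_isClosed_of_isClosed isClosed_Icc (isClosed_Ici (a := (1/2 : ℝ)))
      convert this using 1
      ext t; exact Iff.rfl
    have hSbdd : BddBelow S := ⟨0, fun t ht => ht.1.1⟩
    set T := sInf S with hTdef
    have hTS : T ∈ S := hScl.csInf_mem hSne hSbdd
    obtain ⟨⟨hT0, hT2h⟩, hTge⟩ := hTS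
    have hT0' : 0 < T := by
      rcases lt_or_eq_of_le hT0 with h' | h'
      · exact h'
      · exfalso
        rw [← h', hφ0] at hTge
        simp at hTge
        linarith
    have hlt : ∀ s ∈ Ico (0:ℝ) T, ‖φ s - θ₀‖ ≤ 1/2 := by
      intro s hs
      by_contra hc
      push_neg at hc
      have hsS : s ∈ S := ⟨⟨hs.1, le_trans hs.2.le hT2h⟩, hc.le⟩
      exact absurd (csInf_le hSbdd hsS) (not_le.2 hs.2)
    have hmvt := norm_image_sub_le_of_norm_deriv_right_le_segment
      (f := φ) (f' := fun s => V (φ s)) (a := 0) (b := T) (C := M)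
      (hφcont.mono (Icc_subset_Icc le_rfl hT2h))
      (fun s hs => ((hφ' s ⟨hs.1, le_trans hs.2.le hT2h⟩).hasDerivWithinAt))
      (fun s hs => by
        refine hVb (φ s) ?_
        rw [mem_closedBall_iff_norm]
        exact le_trans (hlt s hs) (by norm_num))
      T (right_mem_Icc.2 hT0)
    rw [hφ0] at hmvt
    have h1 : (1:ℝ)/2 ≤ M * (T - 0) := le_trans hTge hmvt
    have hTle : M * (T - 0) ≤ M * (2*h) := by
      apply mul_le_mul_of_nonneg_left _ hM0.le
      linarith
    linarith
  have hmem : ∀ t ∈ Icc (0:ℝ) (2*h), φ t ∈ closedBall θ₀ 1 := by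
    intro t ht
    rw [mem_closedBall_iff_norm]
    exact le_trans (hstay t ht) (by norm_num)
  -- linear growth bound
  have hlin : ∀ t ∈ Icc (0:ℝ) (2*h), ‖φ t - θ₀‖ ≤ M * t := by
    intro t ht
    have := norm_image_sub_le_of_norm_deriv_right_le_segment
      (f := φ) (f' := fun s => V (φ s)) (a := 0) (b := 2*h) (C := M)
      hφcont
      (fun s hs => ((hφ' s ⟨hs.1, hs.2.le⟩).hasDerivWithinAt))
      (fun s hs => hVb (φ s) (hmem s ⟨hs.1, hs.2.le⟩))
      t ht
    rw [hφ0] at this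
    simpa using this
  -- first-order Taylor bound for φ
  set a := V θ₀ with hadef
  have hanorm : ‖a‖ ≤ M := hVb θ₀ hθ₀mem
  have hquad1 : ∀ t ∈ Icc (0:ℝ) (2*h), ‖φ t - θ₀ - t • a‖ ≤ L*M/2 * t^2 := by
    have hBd : ∀ t : ℝ, HasDerivAt (fun t : ℝ => L*M/2 * t^2) (L*M*t) t := by
      intro t
      have := (hasDerivAt_pow 2 t).const_mul (L*M/2)
      refine this.congr_deriv ?_
      push_cast; ring
    intro t ht
    refine image_norm_le_of_norm_deriv_right_le_deriv_boundary
      (f := fun t => φ t - θ₀ - t • a) (f' := fun s => V (φ s) - a)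
      (a := 0) (b := 2*h)
      ?_ ?_ ?_ hBd ?_ ht
    · exact (hφcont.sub continuousOn_const).sub
        ((continuous_id.smul continuous_const).continuousOn)
    · intro s hs
      have hd : HasDerivAt (fun t => φ t - θ₀ - t • a) (V (φ s) - a) s := by
        have h1 := (hφ' s ⟨hs.1, hs.2.le⟩).sub_const θ₀
        have h2 : HasDerivAt (fun t : ℝ => t • a) a s := by
          simpa using (hasDerivAt_id s).smul_const a
        exact h1.sub h2
      exact hd.hasDerivWithinAt
    · simp [hφ0]
    · intro s hs
      show ‖V (φ s) - a‖ ≤ L*M*s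
      have e : V (φ s) - a = V (φ s) - V θ₀ := by rw [hadef]
      rw [e]
      calc ‖V (φ s) - V θ₀‖ ≤ L * ‖φ s - θ₀‖ :=
            hVlip (φ s) (hmem s ⟨hs.1, hs.2.le⟩) θ₀ hθ₀mem
        _ ≤ L * (M * s) := mul_le_mul_of_nonneg_left (hlin s ⟨hs.1, hs.2.le⟩) hL0
        _ = L*M*s := by ring
  -- second-order Taylor bound for φ
  set b := (P + h • Q) a with hbdef
  have hquad2 : ∀ t ∈ Icc (0:ℝ) (2*h),
      ‖φ t - θ₀ - t • a - (t^2/2) • b‖ ≤ C₁/3 * t^3 := by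
    have hBd : ∀ t : ℝ, HasDerivAt (fun t : ℝ => C₁/3 * t^3) (C₁*t^2) t := by
      intro t
      have := (hasDerivAt_pow 3 t).const_mul (C₁/3)
      refine this.congr_deriv ?_
      push_cast; ring
    intro t ht
    refine image_norm_le_of_norm_deriv_right_le_deriv_boundary
      (f := fun t => φ t - θ₀ - t • a - (t^2/2) • b) (f' := fun s => V (φ s) - a - s • b)
      (a := 0) (b := 2*h)
      ?_ ?_ ?_ hBd ?_ ht
    · refine ((hφcont.sub continuousOn_const).sub
        ((continuous_id.smul continuous_const).continuousOn)).sub ?_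
      exact (((continuous_pow 2).div_const 2).smul continuous_const).continuousOn
    · intro s hs
      have hd : HasDerivAt (fun t => φ t - θ₀ - t • a - (t^2/2) • b)
          (V (φ s) - a - s • b) s := by
        have h1 := (hφ' s ⟨hs.1, hs.2.le⟩).sub_const θ₀
        have h2 : HasDerivAt (fun t : ℝ => t • a) a s := by
          simpa using (hasDerivAt_id s).smul_const a
        have h3 : HasDerivAt (fun t : ℝ => (t^2/2) • b) (s • b) s := by
          have := ((hasDerivAt_pow 2 s).div_const 2).smul_const b
          refine this.congr_deriv ?_
          push_cast; rw [show (2:ℝ)*s^1/2 = s by ring]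
        exact (h1.sub h2).sub h3
      exact hd.hasDerivWithinAt
    · simp [hφ0]
    · intro s hs
      have hs' : s ∈ Icc (0:ℝ) (2*h) := ⟨hs.1, hs.2.le⟩
      show ‖V (φ s) - a - s • b‖ ≤ C₁ * s ^ 2
      have m1 : (P + h • Q) (φ s - θ₀ - s • a) = (P + h • Q) (φ s - θ₀) - s • b := by
        rw [hbdef, map_sub, map_smul]
      have e : V (φ s) - a - s • b
          = (V (φ s) - a - (P + h • Q) (φ s - θ₀))
            + (P + h • Q) (φ s - θ₀ - s • a) := by
        rw [m1]; abel
      rw [e]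
      have t1 : ‖V (φ s) - a - (P + h • Q) (φ s - θ₀)‖ ≤ K * (M*s)^2 := by
        refine (hadef ▸ hVquad (φ s) (hmem s hs')).trans ?_
        refine mul_le_mul_of_nonneg_left ?_ hK0
        have h1 := hlin s hs'
        exact pow_le_pow_left₀ (norm_nonneg _) h1 2
      have t2 : ‖(P + h • Q) (φ s - θ₀ - s • a)‖ ≤ N * (L*M/2 * s^2) := by
        refine ((P + h • Q).le_opNorm _).trans ?_
        exact mul_le_mul hDVnorm (hquad1 s hs') (norm_nonneg _) hN0
      calc ‖(V (φ s) - a - (P + h • Q) (φ s - θ₀)) + (P + h • Q) (φ s - θ₀ - s • a)‖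
          ≤ ‖V (φ s) - a - (P + h • Q) (φ s - θ₀)‖
            + ‖(P + h • Q) (φ s - θ₀ - s • a)‖ := norm_add_le _ _
        _ ≤ K * (M*s)^2 + N * (L*M/2 * s^2) := add_le_add t1 t2
        _ = C₁ * s^2 := by rw [hC₁def]; ring
  have hfin1 : ‖φ (2*h) - θ₀ - (2*h) • a - ((2*h)^2/2) • b‖ ≤ 8*C₁/3 * h^3 := by
    have h1 := hquad2 (2*h) (right_mem_Icc.2 (by linarith))
    calc ‖φ (2*h) - θ₀ - (2*h) • a - ((2*h)^2/2) • b‖ ≤ C₁/3 * (2*h)^3 := h1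
      _ = 8*C₁/3 * h^3 := by ring
  -- Taylor expansion of G₁ at θ₀ toward the first SGD step
  have hθ₁mem : θ₀ - h • g₀ ∈ closedBall θ₀ 1 := by
    rw [mem_closedBall_iff_norm]
    have e : θ₀ - h • g₀ - θ₀ = -(h • g₀) := by abel
    rw [e, norm_neg, norm_smul, Real.norm_eq_abs, abs_of_nonneg hh0.le]
    exact hhg₀
  set r := G₁ (θ₀ - h • g₀) - g₁ + h • (A₁ g₀) with hrdef
  have hrb : ‖r‖ ≤ K₁ * ‖g₀‖^2 * h^2 := by
    have h1 := hK₁ (θ₀ - h • g₀) hθ₁mem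
    rw [← hA₁def, ← hg₁def] at h1
    have e2 : θ₀ - h • g₀ - θ₀ = -(h • g₀) := by abel
    rw [e2] at h1
    have e3 : G₁ (θ₀ - h • g₀) - g₁ - A₁ (-(h • g₀)) = r := by
      rw [map_neg, map_smul, hrdef]; abel
    rw [e3] at h1
    refine h1.trans (le_of_eq ?_)
    rw [norm_neg, norm_smul, Real.norm_eq_abs, abs_of_nonneg hh0.le, mul_pow]
    ring
  set u := P w₀ with hudef
  set v := Q a with hvdef
  have hub : ‖u‖ ≤ ‖P‖ * ‖w₀‖ := hudef ▸ P.le_opNorm w₀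
  have hvb : ‖v‖ ≤ ‖Q‖ * M := by
    refine (hvdef ▸ Q.le_opNorm a).trans ?_
    exact mul_le_mul_of_nonneg_left hanorm (norm_nonneg _)
  have ha2 : a = -(G θ₀) + h • w₀ := by rw [hadef]; exact hVθ₀
  have hbexp : b = DG (G θ₀) + h • u + h • v := by
    rw [hbdef, ContinuousLinearMap.add_apply, ContinuousLinearMap.smul_apply, ← hvdef]
    have hPG : P (G θ₀) = -(DG (G θ₀)) := by
      rw [hPDG]; simp
    have hPa : P a = DG (G θ₀) + h • u := by
      rw [ha2, map_add, map_neg, map_smul, hPG, ← hudef, neg_neg]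
    rw [hPa]
  have hG₁exp : G₁ (θ₀ - h • g₀) = r + g₁ - h • (A₁ g₀) := by rw [hrdef]; abel
  have master : φ (2*h) - ((θ₀ - h • g₀) - h • G₁ (θ₀ - h • g₀))
      = (φ (2*h) - θ₀ - (2*h) • a - ((2*h)^2/2) • b)
        + (2*h^3) • u + (2*h^3) • v + h • r := by
    rw [hG₁exp, hbexp, ha2, hw₀', hGθ₀]
    module
  have hsmul1 : ‖(2*h^3) • u‖ ≤ 2*h^3 * (‖P‖ * ‖w₀‖) := by
    rw [norm_smul, Real.norm_eq_abs, abs_of_nonneg (by positivity)]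
    exact mul_le_mul_of_nonneg_left hub (by positivity)
  have hsmul2 : ‖(2*h^3) • v‖ ≤ 2*h^3 * (‖Q‖ * M) := by
    rw [norm_smul, Real.norm_eq_abs, abs_of_nonneg (by positivity)]
    exact mul_le_mul_of_nonneg_left hvb (by positivity)
  have hsmul3 : ‖h • r‖ ≤ K₁ * ‖g₀‖^2 * h^3 := by
    rw [norm_smul, Real.norm_eq_abs, abs_of_nonneg hh0.le]
    calc h * ‖r‖ ≤ h * (K₁ * ‖g₀‖^2 * h^2) :=
          mul_le_mul_of_nonneg_left hrb hh0.le
      _ = K₁ * ‖g₀‖^2 * h^3 := by ring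
  calc ‖φ (2*h) - ((θ₀ - h • g₀) - h • G₁ (θ₀ - h • g₀))‖
      = ‖(φ (2*h) - θ₀ - (2*h) • a - ((2*h)^2/2) • b)
          + (2*h^3) • u + (2*h^3) • v + h • r‖ := by rw [master]
    _ ≤ ‖(φ (2*h) - θ₀ - (2*h) • a - ((2*h)^2/2) • b)
          + (2*h^3) • u + (2*h^3) • v‖ + ‖h • r‖ := norm_add_le _ _
    _ ≤ (‖(φ (2*h) - θ₀ - (2*h) • a - ((2*h)^2/2) • b) + (2*h^3) • u‖
          + ‖(2*h^3) • v‖) + ‖h • r‖ := by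
        exact add_le_add_left (norm_add_le _ _) _
    _ ≤ ((‖φ (2*h) - θ₀ - (2*h) • a - ((2*h)^2/2) • b‖ + ‖(2*h^3) • u‖)
          + ‖(2*h^3) • v‖) + ‖h • r‖ := by
        exact add_le_add_left (add_le_add_left (norm_add_le _ _) _) _
    _ ≤ ((8*C₁/3 * h^3 + 2*h^3 * (‖P‖ * ‖w₀‖)) + 2*h^3 * (‖Q‖ * M))
          + K₁ * ‖g₀‖^2 * h^3 := by
        exact add_le_add (add_le_add (add_le_add hfin1 hsmul1) hsmul2) hsmul3
    _ = (8*C₁/3 + 2*(‖P‖*‖w₀‖ + ‖Q‖*M) + K₁*‖g₀‖^2) * h^3 := by ring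
    _ ≤ Cfin * h^3 := by
        refine mul_le_mul_of_nonneg_right ?_ (by positivity)
        rw [hCfindef]; linarith

end MainThm
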